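/- Let (C,S) solve C' = γ(S³-S), S' = -(C³-C) on the level set of value a, and let k,l ∈ {-1,1}. Then the derivative of α_{kl}(φ) = C'(S-l) - (C-k)S' satisfies α_{kl}'(φ) = γ(C-k)(S-l)(kC - lS)(3klCS + kC + lS + 1). -/

import Mathlib

/-! Since `α = C'·(S - l) - (C - k)·S'`, the cross terms `C'·S'` cancel and `α' = C''·(S - l) - (C - k)·S''`.
Differentiating the system gives `C'' = -γ(3S² - 1)(C³ - C)` and `S'' = -γ(3C² - 1)(S³ - S)`; as `k² = l² = 1`,
`C³ - C = C(C - k)(C + k)` and `S³ - S = S(S - l)(S + l)`, so `(C - k)(S - l)` factors out and the remaining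
polynomial factors as `(kC - lS)(3klCS + kC + lS + 1)`. -/

section

variable {𝕜 : Type*} [NontriviallyNormedField 𝕜]

theorem HasDerivAt.pow_three_sub_self {f : 𝕜 → 𝕜} {f' x : 𝕜} (hf : HasDerivAt f f' x) :
    HasDerivAt (fun y => f y ^ 3 - f y) ((3 * f x ^ 2 - 1) * f') x :=
  ((hf.fun_pow 3).sub hf).congr_deriv (by push_cast; ring)

theorem hasDerivAt_mul_sub_sub_mul {u v p q : 𝕜 → 𝕜} {p' q' x : 𝕜} (k l : 𝕜)
    (hu : HasDerivAt u (p x) x) (hv : HasDerivAt v (q x) x)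
    (hp : HasDerivAt p p' x) (hq : HasDerivAt q q' x) :
    HasDerivAt (fun y => p y * (v y - l) - (u y - k) * q y) (p' * (v x - l) - (u x - k) * q') x :=
  ((hp.mul (hv.sub_const l)).sub ((hu.sub_const k).mul hq)).congr_deriv (by ring)

end

theorem alpha_kl_deriv_factorization {γ k l c s : ℝ} (hk : k ^ 2 = 1) (hl : l ^ 2 = 1) :
    -γ * (3 * s ^ 2 - 1) * (c ^ 3 - c) * (s - l) - (c - k) * (-((3 * c ^ 2 - 1) * (γ * (s ^ 3 - s)))) =
      γ * (c - k) * (s - l) * (k * c - l * s) * (3 * k * l * c * s + k * c + l * s + 1) := by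
  linear_combination
    (-γ * (3 * s ^ 2 - 1) * c * (s - l) - γ * (c - k) * (s - l) * (3 * l * c ^ 2 * s + c ^ 2)) * hk +
    (γ * (c - k) * (3 * c ^ 2 - 1) * s + γ * (c - k) * (s - l) * (3 * k * c * s ^ 2 + s ^ 2)) * hl

theorem alpha_kl_deriv_general (γ : ℝ)
    (k l : ℝ) (hk : k = -1 ∨ k = 1) (hl : l = -1 ∨ l = 1)
    (C S : ℝ → ℝ)
    (hC : ∀ φ, HasDerivAt C (γ * ((S φ) ^ 3 - S φ)) φ)
    (hS : ∀ φ, HasDerivAt S (-((C φ) ^ 3 - C φ)) φ) :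
    ∀ φ, HasDerivAt
      (fun φ => γ * ((S φ) ^ 3 - S φ) * (S φ - l) - (C φ - k) * (-((C φ) ^ 3 - C φ)))
      (γ * (C φ - k) * (S φ - l) * (k * C φ - l * S φ) *
        (3 * k * l * C φ * S φ + k * C φ + l * S φ + 1)) φ := by
  intro φ
  have hC'' : HasDerivAt (fun φ => γ * (S φ ^ 3 - S φ))
      (-γ * (3 * S φ ^ 2 - 1) * (C φ ^ 3 - C φ)) φ :=
    ((hS φ).pow_three_sub_self.const_mul γ).congr_deriv (by ring)
  have hS'' := (hC φ).pow_three_sub_self.neg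
  rw [← alpha_kl_deriv_factorization (sq_eq_one_iff.mpr hk.symm) (sq_eq_one_iff.mpr hl.symm)]
  exact hasDerivAt_mul_sub_sub_mul k l (hC φ) (hS φ) hC'' hS''

/-- for k,l ∈ {-1,1} and a solution (C,S) of
C' = γ(S³-S), S' = -(C³-C), the derivative of
α_{kl}(φ) = C'(S-l) - (C-k)S' is γ(C-k)(S-l)(kC-lS)(3klCS + kC + lS + 1). -/
theorem alpha_kl_deriv (γ : ℝ) (hγ : 0 < γ ∧ γ ≤ 1)
    (k l : ℝ) (hk : k = -1 ∨ k = 1) (hl : l = -1 ∨ l = 1)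
    (C S : ℝ → ℝ)
    (hC : ∀ φ, HasDerivAt C (γ * ((S φ) ^ 3 - S φ)) φ)
    (hS : ∀ φ, HasDerivAt S (-((C φ) ^ 3 - C φ)) φ) :
    ∀ φ, HasDerivAt
      (fun φ => γ * ((S φ) ^ 3 - S φ) * (S φ - l) - (C φ - k) * (-((C φ) ^ 3 - C φ)))
      (γ * (C φ - k) * (S φ - l) * (k * C φ - l * S φ) *
        (3 * k * l * C φ * S φ + k * C φ + l * S φ + 1)) φ :=
  alpha_kl_deriv_general γ k l hk hl C S hC hS
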